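/- arXiv:1002.3194 — 2 statements merged into one kernel-verified Lean document; each statement's English description precedes it below -/
import Mathlib

section
/- The six-vertex R-matrix R(u,v), defined as the 4x4 matrix with diagonal entries [1+(u−v)/2], [(u−v)/2], [(u−v)/2], [1+(u−v)/2] along positions (1,1),(2,2),(3,3),(4,4) and off-diagonal entries q^{(−u+v)/2} at (2,3) and q^{(u−v)/2} at (3,2), satisfies the Yang–Baxter equation R_{12}(u,v) R_{13}(u,w) R_{23}(v,w) = R_{23}(v,w) R_{13}(u,w) R_{12}(u,v) as an identity in End(C^2 ⊗ C^2 ⊗ C^2). -/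
open Complex

/-- `q^z := exp (z * l)` for a fixed branch `l` of `log q`. -/
noncomputable def qPow (l z : ℂ) : ℂ := Complex.exp (z * l)

/-- The q-number `[z] = (q^z - q^{-z})/(q - q⁻¹)`. -/
noncomputable def qNum (q l z : ℂ) : ℂ := (qPow l z - qPow l (-z)) / (q - q⁻¹)

/-- The six-vertex R-matrix `R(u,v)` on `ℂ² ⊗ ℂ²` (basis order `(1,2,3,4) =
((0,0),(0,1),(1,0),(1,1))`): diagonal entries `[1+(u−v)/2], [(u−v)/2],
[(u−v)/2], [1+(u−v)/2]`, entry `q^{(v−u)/2}` at position `(2,3)` and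
`q^{(u−v)/2}` at position `(3,2)`. -/
noncomputable def Rmat (q l u v : ℂ) :
    Matrix (Fin 2 × Fin 2) (Fin 2 × Fin 2) ℂ := fun p p' =>
  if p = p' then
    (if p.1 = p.2 then qNum q l (1 + (u - v) / 2) else qNum q l ((u - v) / 2))
  else if p = ((0 : Fin 2), (1 : Fin 2)) ∧ p' = ((1 : Fin 2), (0 : Fin 2)) then
    qPow l ((v - u) / 2)
  else if p = ((1 : Fin 2), (0 : Fin 2)) ∧ p' = ((0 : Fin 2), (1 : Fin 2)) then
    qPow l ((u - v) / 2)
  else 0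

/-- `R₁₂(u,v)` acting on factors 1 and 2 of `ℂ² ⊗ ℂ² ⊗ ℂ²`. -/
noncomputable def R12 (q l u v : ℂ) :
    Matrix (Fin 2 × Fin 2 × Fin 2) (Fin 2 × Fin 2 × Fin 2) ℂ := fun p p' =>
  Rmat q l u v (p.1, p.2.1) (p'.1, p'.2.1) * (if p.2.2 = p'.2.2 then 1 else 0)

/-- `R₁₃(u,v)` acting on factors 1 and 3. -/
noncomputable def R13 (q l u v : ℂ) :
    Matrix (Fin 2 × Fin 2 × Fin 2) (Fin 2 × Fin 2 × Fin 2) ℂ := fun p p' =>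
  Rmat q l u v (p.1, p.2.2) (p'.1, p'.2.2) * (if p.2.1 = p'.2.1 then 1 else 0)

/-- `R₂₃(u,v)` acting on factors 2 and 3. -/
noncomputable def R23 (q l u v : ℂ) :
    Matrix (Fin 2 × Fin 2 × Fin 2) (Fin 2 × Fin 2 × Fin 2) ℂ := fun p p' =>
  (if p.1 = p'.1 then 1 else 0) * Rmat q l u v (p.2.1, p.2.2) (p'.2.1, p'.2.2)

/-!
With `x = q^u`, `y = q^v`, the matrix `(q - q⁻¹) q^{(u+v)/2} R(u,v)` has entries
`q x - q⁻¹ y`, `x - y`, `(q - q⁻¹) y`, `(q - q⁻¹) x`, which are linear in `(x, y)`.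
After this rescaling the Yang–Baxter equation becomes a polynomial identity in
`q, q⁻¹, q^u, q^v, q^w`, checked entrywise using only `q * q⁻¹ = 1`; the scalar
factors are the same on both sides.
-/

section Embedding

variable {R α β γ : Type*} [Semiring R]

def act12 [DecidableEq γ] (M : Matrix (α × β) (α × β) R) :
    Matrix (α × β × γ) (α × β × γ) R := fun p p' =>
  M (p.1, p.2.1) (p'.1, p'.2.1) * (if p.2.2 = p'.2.2 then 1 else 0)

def act13 [DecidableEq β] (M : Matrix (α × γ) (α × γ) R) :
    Matrix (α × β × γ) (α × β × γ) R := fun p p' =>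
  M (p.1, p.2.2) (p'.1, p'.2.2) * (if p.2.1 = p'.2.1 then 1 else 0)

def act23 [DecidableEq α] (M : Matrix (β × γ) (β × γ) R) :
    Matrix (α × β × γ) (α × β × γ) R := fun p p' =>
  (if p.1 = p'.1 then 1 else 0) * M (p.2.1, p.2.2) (p'.2.1, p'.2.2)

theorem act12_smul [DecidableEq γ] (c : R) (M : Matrix (α × β) (α × β) R) :
    (act12 (c • M) : Matrix (α × β × γ) _ R) = c • act12 M := by
  ext p p'
  simp only [act12, Matrix.smul_apply, smul_eq_mul, mul_assoc]

theorem act13_smul [DecidableEq β] (c : R) (M : Matrix (α × γ) (α × γ) R) :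
    (act13 (c • M) : Matrix (α × β × γ) _ R) = c • act13 M := by
  ext p p'
  simp only [act13, Matrix.smul_apply, smul_eq_mul, mul_assoc]

theorem act23_smul {R : Type*} [CommSemiring R] [DecidableEq α] (c : R)
    (M : Matrix (β × γ) (β × γ) R) :
    (act23 (c • M) : Matrix (α × β × γ) _ R) = c • act23 M := by
  ext p p'
  simp only [act23, Matrix.smul_apply, smul_eq_mul, mul_left_comm]

end Embedding

section SixVertexPoly

variable {R : Type*} [CommRing R]

def sixVertexPoly (s t x y : R) : Matrix (Fin 2 × Fin 2) (Fin 2 × Fin 2) R := fun p p' =>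
  if p = p' then (if p.1 = p.2 then s * x - t * y else x - y)
  else if p = (0, 1) ∧ p' = (1, 0) then (s - t) * y
  else if p = (1, 0) ∧ p' = (0, 1) then (s - t) * x
  else 0

theorem sixVertexPoly_mul_mul (s t c x y : R) :
    sixVertexPoly s t (c * x) (c * y) = c • sixVertexPoly s t x y := by
  ext p p'
  simp only [sixVertexPoly, Matrix.smul_apply, smul_eq_mul]
  split_ifs <;> ring

set_option maxHeartbeats 1000000 in
theorem sixVertexPoly_yangBaxter (s t x y z : R) (hst : s * t = 1) :
    act12 (γ := Fin 2) (sixVertexPoly s t x y) * act13 (β := Fin 2) (sixVertexPoly s t x z) *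
        act23 (α := Fin 2) (sixVertexPoly s t y z) =
      act23 (sixVertexPoly s t y z) * act13 (sixVertexPoly s t x z) *
        act12 (sixVertexPoly s t x y) := by
  ext ⟨i, j, k⟩ ⟨i', j', k'⟩
  simp only [Matrix.mul_apply, Fintype.sum_prod_type, Fin.sum_univ_two, act12, act13, act23]
  fin_cases i <;> fin_cases j <;> fin_cases k <;> fin_cases i' <;> fin_cases j' <;> fin_cases k' <;>
    simp [sixVertexPoly] <;> grind

end SixVertexPoly

theorem qPow_add (l z w : ℂ) : qPow l (z + w) = qPow l z * qPow l w := by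
  simp only [qPow, add_mul, Complex.exp_add]

theorem qPow_neg (l z : ℂ) : qPow l (-z) = (qPow l z)⁻¹ := by
  simp only [qPow, neg_mul, Complex.exp_neg]

theorem Rmat_eq_smul_sixVertexPoly_half (q l u v : ℂ) (hqq : q - q⁻¹ ≠ 0)
    (hl : Complex.exp l = q) :
    Rmat q l u v = (q - q⁻¹)⁻¹ •
      sixVertexPoly q q⁻¹ (qPow l ((u - v) / 2)) (qPow l ((v - u) / 2)) := by
  have hshift : qPow l (1 + (u - v) / 2) = q * qPow l ((u - v) / 2) := by
    rw [qPow_add, qPow, one_mul, hl]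
  have hflip : qPow l ((v - u) / 2) = (qPow l ((u - v) / 2))⁻¹ := by
    rw [← qPow_neg]; ring_nf
  ext p p'
  simp only [Rmat, sixVertexPoly, qNum, Matrix.smul_apply, smul_eq_mul, qPow_neg, hshift, hflip,
    mul_inv]
  generalize qPow l ((u - v) / 2) = r
  split_ifs <;> simp only [div_eq_inv_mul, inv_mul_cancel_left₀ hqq, mul_zero]

theorem Rmat_eq_smul_sixVertexPoly (q l u v : ℂ) (hqq : q - q⁻¹ ≠ 0)
    (hl : Complex.exp l = q) :
    Rmat q l u v = ((q - q⁻¹) * qPow l ((u + v) / 2))⁻¹ •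
      sixVertexPoly q q⁻¹ (qPow l u) (qPow l v) := by
  have hu : qPow l u = qPow l ((u + v) / 2) * qPow l ((u - v) / 2) := by
    rw [← qPow_add]; ring_nf
  have hv : qPow l v = qPow l ((u + v) / 2) * qPow l ((v - u) / 2) := by
    rw [← qPow_add]; ring_nf
  have hc : qPow l ((u + v) / 2) ≠ 0 := Complex.exp_ne_zero _
  rw [hu, hv, sixVertexPoly_mul_mul, smul_smul, mul_inv, mul_assoc, inv_mul_cancel₀ hc,
    mul_one, Rmat_eq_smul_sixVertexPoly_half q l u v hqq hl]

theorem sixVertex_yang_baxter_general (q l : ℂ) (hqq : q - q⁻¹ ≠ 0)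
    (hl : Complex.exp l = q) (u v w : ℂ) :
    R12 q l u v * R13 q l u w * R23 q l v w
      = R23 q l v w * R13 q l u w * R12 q l u v := by
  have hq : q * q⁻¹ = 1 := mul_inv_cancel₀ (hl ▸ Complex.exp_ne_zero l)
  change act12 (Rmat q l u v) * act13 (Rmat q l u w) * act23 (Rmat q l v w)
    = act23 (Rmat q l v w) * act13 (Rmat q l u w) * act12 (Rmat q l u v)
  simp only [Rmat_eq_smul_sixVertexPoly q l _ _ hqq hl, act12_smul, act13_smul, act23_smul,
    Matrix.smul_mul, Matrix.mul_smul, smul_smul, sixVertexPoly_yangBaxter _ _ _ _ _ hq]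
  congr 1
  ring

/-- the six-vertex R-matrix satisfies the Yang–Baxter equation. -/
theorem sixVertex_yang_baxter (q l : ℂ) (hq : q ≠ 0) (hqq : q - q⁻¹ ≠ 0)
    (hl : Complex.exp l = q) (u v w : ℂ) :
    R12 q l u v * R13 q l u w * R23 q l v w
      = R23 q l v w * R13 q l u w * R12 q l u v :=
  sixVertex_yang_baxter_general q l hqq hl u v w
end

section
/- Let A be a Hermitian operator (finite-dimensional, here End((C^2)^{⊗L})) and suppose invertible positive operators T_1(u), T_2(u) depend analytically on u with T_1(u) = e^{iP}(Id + uA + O(u^2)) and T_2(u) = e^{−iP}(Id + uA + O(u^2)) for a unitary e^{iP} commuting with A. Then for β > 0, lim_{N→∞} (T_1(−β/N) T_2(−β/N))^{N/2} = e^{−βA} (Trotter-type limit). -/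
open Matrix Filter
open scoped ComplexOrder

attribute [local instance] Matrix.linftyOpNormedAddCommGroup Matrix.linftyOpNormedRing

open Asymptotics Topology

attribute [local instance] Matrix.linftyOpNormedAlgebra

/-!
Because `U` commutes with `A` and `U U⋆ = 1`, the product `T₁(u) T₂(u)` is
`(1 + uA)² + O(u²) = exp(2uA) + O(u²)`. A sequence with `a_n = exp(x / n) + o(1 / n)` satisfies
`a_n ^ n → exp x`: by telescoping, `‖a ^ n - exp x‖ ≤ n δ exp(‖x‖ + n δ)` where
`δ = ‖a - exp(x / n)‖`.
-/

theorem norm_pow_succ_sub_pow_succ_le {R : Type*} [NormedRing R] {a b : R} {r : ℝ}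
    (ha : ‖a‖ ≤ r) (hb : ‖b‖ ≤ r) (n : ℕ) :
    ‖a ^ (n + 1) - b ^ (n + 1)‖ ≤ (n + 1) * r ^ n * ‖a - b‖ := by
  induction n with
  | zero => simp
  | succ n ih =>
    have hr : 0 ≤ r := (norm_nonneg a).trans ha
    have hpow : ‖a ^ (n + 1)‖ ≤ r ^ (n + 1) :=
      (norm_pow_le' a n.succ_pos).trans (pow_le_pow_left₀ (norm_nonneg a) ha _)
    calc ‖a ^ (n + 2) - b ^ (n + 2)‖
        = ‖a ^ (n + 1) * (a - b) + (a ^ (n + 1) - b ^ (n + 1)) * b‖ := by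
          congr 1; noncomm_ring
      _ ≤ ‖a ^ (n + 1)‖ * ‖a - b‖ + ‖a ^ (n + 1) - b ^ (n + 1)‖ * ‖b‖ :=
          (norm_add_le _ _).trans (add_le_add (norm_mul_le _ _) (norm_mul_le _ _))
      _ ≤ r ^ (n + 1) * ‖a - b‖ + ((n + 1) * r ^ n * ‖a - b‖) * r := by
          gcongr
      _ = ((n + 1 : ℕ) + 1) * r ^ (n + 1) * ‖a - b‖ := by push_cast; ring

theorem mul_mul_mul_eq_mul_self {M : Type*} [Monoid M] {U V B : M} (hUV : U * V = 1)
    (hUB : Commute U B) : U * B * (V * B) = B * B := by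
  rw [hUB.eq, mul_assoc, ← mul_assoc U, hUV, one_mul]

theorem Asymptotics.IsBigO.mul_sub_mul {α R : Type*} [NormedRing R] {l : Filter α}
    {f₁ f₂ g₁ g₂ : α → R} {k : α → ℝ} (h₁ : (fun a => f₁ a - g₁ a) =O[l] k)
    (h₂ : (fun a => f₂ a - g₂ a) =O[l] k) (hg₁ : g₁ =O[l] fun _ => (1 : ℝ))
    (hg₂ : g₂ =O[l] fun _ => (1 : ℝ)) (hk : Tendsto k l (𝓝 0)) :
    (fun a => f₁ a * f₂ a - g₁ a * g₂ a) =O[l] k := by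
  have hf₂ : f₂ =O[l] fun _ => (1 : ℝ) :=
    ((h₂.trans_tendsto hk).isBigO_one ℝ).add hg₂ |>.congr_left fun a => sub_add_cancel _ _
  have h₁' := h₁.mul hf₂
  have h₂' := hg₁.mul h₂
  simp only [mul_one, one_mul] at h₁' h₂'
  exact (h₁'.add h₂').congr_left fun a => by noncomm_ring

theorem isBigO_sq_of_norm_le {E : Type*} [SeminormedAddCommGroup E] {g : ℝ → E} {C ε : ℝ}
    (hε : 0 < ε) (hg : ∀ u, |u| < ε → ‖g u‖ ≤ C * u ^ 2) : g =O[𝓝 0] fun u => u ^ 2 := by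
  refine IsBigO.of_bound C ?_
  filter_upwards [Metric.ball_mem_nhds (0 : ℝ) hε] with u hu
  rw [Real.norm_of_nonneg (sq_nonneg u)]
  exact hg u (by simpa using hu)

section ExpAsymptotics

variable {R : Type*} [NormedRing R] [NormedAlgebra ℝ R]

theorem norm_exp_le_exp_norm [NormOneClass R] (x : R) : ‖NormedSpace.exp x‖ ≤ Real.exp ‖x‖ := by
  rw [NormedSpace.exp_eq_tsum ℝ, Real.exp_eq_exp_ℝ, NormedSpace.exp_eq_tsum_div]
  refine (norm_tsum_le_tsum_norm (NormedSpace.norm_expSeries_summable' x)).trans ?_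
  refine Summable.tsum_le_tsum (fun n => ?_) (NormedSpace.norm_expSeries_summable' x)
    (Real.summable_pow_div_factorial ‖x‖)
  rw [norm_smul, norm_inv, Real.norm_natCast, ← div_eq_inv_mul]
  gcongr
  exact norm_pow_le x n

variable [CompleteSpace R]

theorem isBigO_exp_sub_one_add (x : R) :
    (fun u : ℝ => NormedSpace.exp (u • x) - (1 + u • x)) =O[𝓝 0] fun u => u ^ 2 := by
  have hsmul : Tendsto (fun u : ℝ => u • x) (𝓝 0) (𝓝 0) := by
    simpa using (tendsto_id (x := 𝓝 (0 : ℝ))).smul_const x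
  have htaylor := ((NormedSpace.exp_hasFPowerSeriesAt_zero (𝕂 := ℝ) (𝔸 := R)
    ).isBigO_sub_partialSum_pow 2).comp_tendsto hsmul
  have hpartial (y : R) : (NormedSpace.expSeries ℝ R).partialSum 2 y = 1 + y := by
    simp [FormalMultilinearSeries.partialSum, Finset.sum_range_succ,
      NormedSpace.expSeries_apply_eq]
  refine (htaylor.congr_left fun u => by simp [hpartial]).trans ?_
  refine IsBigO.of_bound (‖x‖ ^ 2) (Eventually.of_forall fun u => ?_)
  simp [norm_smul, mul_pow, mul_comm]

theorem isBigO_mul_sub_exp_two_smul {U V A : R} (hUV : U * V = 1) (hUA : Commute U A)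
    {T₁ T₂ : ℝ → R} (h₁ : (fun u => T₁ u - U * (1 + u • A)) =O[𝓝 0] fun u => u ^ 2)
    (h₂ : (fun u => T₂ u - V * (1 + u • A)) =O[𝓝 0] fun u => u ^ 2) :
    (fun u => T₁ u * T₂ u - NormedSpace.exp (u • (2 : ℝ) • A)) =O[𝓝 0] fun u => u ^ 2 := by
  have hbdd : ∀ W : R, (fun u : ℝ => W * (1 + u • A)) =O[𝓝 0] fun _ => (1 : ℝ) := fun W =>
    ((by fun_prop : Continuous fun u : ℝ => W * (1 + u • A)).tendsto 0).isBigO_one ℝ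
  have hprod := h₁.mul_sub_mul h₂ (hbdd U) (hbdd V)
    (by simpa using ((continuous_pow 2).tendsto (0 : ℝ)))
  have hsq : (fun u : ℝ => u ^ 2 • (A * A)) =O[𝓝 0] fun u => u ^ 2 :=
    IsBigO.of_bound ‖A * A‖ (Eventually.of_forall fun u => by
      rw [norm_smul, mul_comm])
  refine ((hprod.add hsq).sub (isBigO_exp_sub_one_add ((2 : ℝ) • A))).congr_left fun u => ?_
  rw [mul_mul_mul_eq_mul_self hUV ((Commute.one_right U).add_right (hUA.smul_right u))]
  simp only [smul_smul, add_mul, mul_add, one_mul, mul_one, smul_mul_smul_comm]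
  module

variable [NormOneClass R]

theorem norm_pow_sub_exp_le {n : ℕ} (hn : n ≠ 0) (a x : R) :
    ‖a ^ n - NormedSpace.exp x‖ ≤
      n * ‖a - NormedSpace.exp ((n : ℝ)⁻¹ • x)‖ *
        Real.exp (‖x‖ + n * ‖a - NormedSpace.exp ((n : ℝ)⁻¹ • x)‖) := by
  set b := NormedSpace.exp ((n : ℝ)⁻¹ • x)
  set δ := ‖a - b‖
  have hn' : (0 : ℝ) < n := by positivity
  have hb_pow : b ^ n = NormedSpace.exp x := by
    let : NormedAlgebra ℚ R := NormedAlgebra.restrictScalars ℚ ℝ R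
    rw [← NormedSpace.exp_nsmul, ← Nat.cast_smul_eq_nsmul ℝ, smul_inv_smul₀ hn'.ne']
  have hb : ‖b‖ ≤ Real.exp (‖x‖ / n) := by
    refine (norm_exp_le_exp_norm _).trans_eq ?_
    rw [norm_smul, norm_inv, Real.norm_natCast, inv_mul_eq_div]
  set r := Real.exp (‖x‖ / n + δ)
  have hr : 1 ≤ r := Real.one_le_exp (by positivity)
  have hbr : ‖b‖ ≤ r := hb.trans (Real.exp_le_exp.mpr (by simp [δ]))
  have har : ‖a‖ ≤ r := calc
    ‖a‖ ≤ ‖b‖ + δ := norm_le_norm_add_norm_sub' a b |>.trans_eq (by rw [add_comm])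
    _ ≤ Real.exp (‖x‖ / n) * (1 + δ) := by
        nlinarith [Real.one_le_exp (by positivity : 0 ≤ ‖x‖ / n), norm_nonneg (a - b)]
    _ ≤ Real.exp (‖x‖ / n) * Real.exp δ := by gcongr; linarith [Real.add_one_le_exp δ]
    _ = r := (Real.exp_add _ _).symm
  obtain ⟨m, rfl⟩ := Nat.exists_eq_succ_of_ne_zero hn
  calc ‖a ^ (m + 1) - NormedSpace.exp x‖ ≤ (m + 1) * r ^ m * δ := by
        rw [← hb_pow]; exact norm_pow_succ_sub_pow_succ_le har hbr m
    _ ≤ (m + 1) * r ^ (m + 1) * δ := by gcongr; exact m.le_succ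
    _ = _ := by
        have hr_pow : r ^ (m + 1) = Real.exp (‖x‖ + (m + 1 : ℕ) * δ) := by
          rw [← Real.exp_nat_mul]; congr 1; field_simp
        rw [hr_pow]; push_cast; ring

theorem tendsto_pow_of_isBigO_sub_exp {f : ℝ → R} {x : R}
    (hf : (fun u => f u - NormedSpace.exp (u • x)) =O[𝓝 0] fun u => u ^ 2) (t : ℝ) :
    Tendsto (fun n : ℕ => f (t / n) ^ n) atTop (𝓝 (NormedSpace.exp (t • x))) := by
  set δ : ℕ → ℝ := fun n => ‖f (t / n) - NormedSpace.exp ((t / n) • x)‖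
  have hstep : Tendsto (fun n : ℕ => t / n) atTop (𝓝 0) :=
    tendsto_const_div_atTop_nhds_zero_nat t
  have hδ : Tendsto (fun n : ℕ => n * δ n) atTop (𝓝 0) := by
    refine ((isBigO_refl (fun n : ℕ => (n : ℝ)) atTop).mul
      (hf.comp_tendsto hstep).norm_left).trans_tendsto ?_
    have hsimp : (fun n : ℕ => (n : ℝ) * (t / n) ^ 2) = fun n : ℕ => t ^ 2 / n := by
      funext n
      rcases eq_or_ne (n : ℝ) 0 with hn | hn
      · simp [hn]
      · field_simp
    simpa [Function.comp_def, hsimp] using tendsto_const_div_atTop_nhds_zero_nat (t ^ 2)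
  have hbound : ∀ᶠ n : ℕ in atTop, ‖f (t / n) ^ n - NormedSpace.exp (t • x)‖ ≤
      n * δ n * Real.exp (‖t • x‖ + n * δ n) := by
    filter_upwards [eventually_ne_atTop 0] with n hn
    have h := norm_pow_sub_exp_le hn (f (t / n)) (t • x)
    rwa [smul_smul, inv_mul_eq_div] at h
  rw [tendsto_iff_norm_sub_tendsto_zero]
  refine squeeze_zero' (Eventually.of_forall fun n => norm_nonneg _) hbound ?_
  simpa using hδ.mul ((tendsto_const_nhds.add hδ).rexp)

end ExpAsymptotics

theorem trotter_limit_with_unitary_general {d : ℕ}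
    (A : Matrix (Fin d) (Fin d) ℂ)
    (U : Matrix (Fin d) (Fin d) ℂ) (hU : U ∈ Matrix.unitaryGroup (Fin d) ℂ)
    (hUA : U * A = A * U)
    (T₁ T₂ : ℝ → Matrix (Fin d) (Fin d) ℂ)
    (C ε : ℝ) (hε : 0 < ε)
    (hT₁ : ∀ u : ℝ, |u| < ε →
      ‖T₁ u - U * (1 + (u : ℂ) • A)‖ ≤ C * u ^ 2)
    (hT₂ : ∀ u : ℝ, |u| < ε →
      ‖T₂ u - star U * (1 + (u : ℂ) • A)‖ ≤ C * u ^ 2)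
    (β : ℝ) :
    Tendsto (fun M : ℕ => (T₁ (-β / (2 * M)) * T₂ (-β / (2 * M))) ^ M)
      atTop (nhds (NormedSpace.exp ((-β : ℂ) • A))) := by
  -- `‖1‖ = 1` for the operator norm only once `Fin d` is nonempty
  rcases isEmpty_or_nonempty (Fin d) with _ | _
  · exact tendsto_const_nhds.congr fun _ => Subsingleton.elim _ _
  simp only [Complex.coe_smul] at hT₁ hT₂
  have hstep := isBigO_mul_sub_exp_two_smul (Unitary.mul_star_self_of_mem hU) hUA
    (isBigO_sq_of_norm_le hε hT₁) (isBigO_sq_of_norm_le hε hT₂)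
  have hlim := tendsto_pow_of_isBigO_sub_exp hstep (-β / 2)
  rw [smul_smul, div_mul_cancel₀ _ two_ne_zero] at hlim
  simp only [div_div] at hlim
  rw [← Complex.ofReal_neg, Complex.coe_smul]
  exact hlim

/-- Trotter-type limit. If `A` is Hermitian, `U` unitary and
commuting with `A`, and `T₁(u) = U(Id + uA) + O(u²)`,
`T₂(u) = U⁻¹(Id + uA) + O(u²)` are positive definite (hence invertible) for
`u` near `0`, then for `β > 0` and even Trotter number `N = 2M`,
`(T₁(−β/N) T₂(−β/N))^{N/2} → exp(−βA)` as `N → ∞`. -/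
theorem trotter_limit_with_unitary {d : ℕ}
    (A : Matrix (Fin d) (Fin d) ℂ) (hA : A.IsHermitian)
    (U : Matrix (Fin d) (Fin d) ℂ) (hU : U ∈ Matrix.unitaryGroup (Fin d) ℂ)
    (hUA : U * A = A * U)
    (T₁ T₂ : ℝ → Matrix (Fin d) (Fin d) ℂ)
    (C ε : ℝ) (hε : 0 < ε)
    (hpos₁ : ∀ u : ℝ, |u| < ε → (T₁ u).PosDef)
    (hpos₂ : ∀ u : ℝ, |u| < ε → (T₂ u).PosDef)
    (hT₁ : ∀ u : ℝ, |u| < ε →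
      ‖T₁ u - U * (1 + (u : ℂ) • A)‖ ≤ C * u ^ 2)
    (hT₂ : ∀ u : ℝ, |u| < ε →
      ‖T₂ u - star U * (1 + (u : ℂ) • A)‖ ≤ C * u ^ 2)
    (β : ℝ) (hβ : 0 < β) :
    Tendsto (fun M : ℕ => (T₁ (-β / (2 * M)) * T₂ (-β / (2 * M))) ^ M)
      atTop (nhds (NormedSpace.exp ((-β : ℂ) • A))) :=
  trotter_limit_with_unitary_general A U hU hUA T₁ T₂ C ε hε hT₁ hT₂ β
end
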